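/- Consider the one-dimensional problem with g(m) = m and V(x) = π cos(2πx). Let u : ℝ → ℝ be Lipschitz and 1-periodic, let m ∈ L¹([0,1]) with m ≥ 0 a.e. and ∫₀¹ m dx = 1, and let H̄ ∈ ℝ be such that: (i) m(x) u'(x) = 0 for a.e. x; (ii) (1/2)(u'(x))² + π cos(2πx) ≤ m(x) + H̄ for a.e. x; and (iii) ((1/2)(u'(x))² + π cos(2πx) − m(x) − H̄) m(x) = 0 for a.e. x. Then H̄ = 0 and m(x) = (π cos(2πx))⁺ for a.e. x ∈ [0,1]. -/

import Mathlib

/-!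
Pointwise, the complementarity conditions force `m = (V - H̄)⁺` with `V x = π cos (2πx)`:
where `m > 0` we have `u' = 0` and equality in (ii), and where `m = 0` (ii) gives `V ≤ H̄`.
The mass `c ↦ ∫₀¹ (V - c)⁺` is strictly decreasing below `max V = π`, and at `c = 0`
it equals `∫_{-1/4}^{1/4} π cos (2πx) dx = 1`; so the mass constraint pins down `H̄ = 0`.
-/

open MeasureTheory Set Real

lemma eq_max_sub_zero_of_complementarity {d v m H : ℝ} (hm : 0 ≤ m) (h1 : m * d = 0)
    (h2 : 1 / 2 * d ^ 2 + v ≤ m + H) (h3 : (1 / 2 * d ^ 2 + v - m - H) * m = 0) :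
    m = max (v - H) 0 := by
  rcases hm.eq_or_lt with rfl | hpos
  · exact (max_eq_right (by nlinarith [sq_nonneg d])).symm
  · have hd : d = 0 := (mul_eq_zero.mp h1).resolve_left hpos.ne'
    have hvm : v - H = m := by
      subst hd
      linarith [(mul_eq_zero.mp h3).resolve_right hpos.ne']
    rw [hvm, max_eq_left hpos.le]

lemma integral_max_sub_lt_of_lt {f : ℝ → ℝ} {a b c c' : ℝ} (hab : a < b)
    (hf : ContinuousOn f (Icc a b)) (hcc' : c < c') (hexceeds : ∃ x ∈ Icc a b, c < f x) :
    ∫ x in a..b, max (f x - c') 0 < ∫ x in a..b, max (f x - c) 0 := by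
  obtain ⟨x₀, hx₀, hcx₀⟩ := hexceeds
  refine intervalIntegral.integral_lt_integral_of_continuousOn_of_le_of_exists_lt hab
    ((hf.sub continuousOn_const).sup continuousOn_const)
    ((hf.sub continuousOn_const).sup continuousOn_const)
    (fun x _ => max_le_max (by linarith) le_rfl) ⟨x₀, hx₀, ?_⟩
  exact max_lt_iff.2 ⟨lt_max_of_lt_left (by linarith), lt_max_of_lt_left (by linarith)⟩

lemma integral_pi_mul_cos_two_pi_mul (a b : ℝ) :
    ∫ x in a..b, π * cos (2 * π * x) = (sin (2 * π * b) - sin (2 * π * a)) / 2 := by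
  have h2π : 2 * π ≠ 0 := by positivity
  rw [intervalIntegral.integral_const_mul,
    intervalIntegral.integral_comp_mul_left (fun x => cos x) h2π, integral_cos, smul_eq_mul]
  field_simp

lemma integral_max_pi_mul_cos_two_pi_mul_zero :
    ∫ x in (0 : ℝ)..1, max (π * cos (2 * π * x)) 0 = 1 := by
  set V : ℝ → ℝ := fun x => max (π * cos (2 * π * x)) 0 with hV
  have hVc : Continuous V := by fun_prop
  have hper : Function.Periodic V 1 := fun x => by
    simp only [hV, mul_add, mul_one, cos_add_two_pi]
  have hcos_nonneg : ∫ x in (-(1 / 4) : ℝ)..(1 / 4), V x = 1 := by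
    rw [intervalIntegral.integral_congr (g := fun x => π * cos (2 * π * x)),
      integral_pi_mul_cos_two_pi_mul]
    · have : 2 * π * (-(1 / 4)) = -(π / 2) := by ring
      rw [this, sin_neg, show 2 * π * (1 / 4) = π / 2 by ring, sin_pi_div_two]
      norm_num
    · intro x hx
      rw [uIcc_of_le (by norm_num)] at hx
      refine max_eq_left (mul_nonneg pi_pos.le (cos_nonneg_of_mem_Icc ⟨?_, ?_⟩)) <;>
        nlinarith [hx.1, hx.2, pi_pos]
  have hcos_nonpos : ∫ x in (1 / 4 : ℝ)..(3 / 4), V x = 0 := by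
    rw [intervalIntegral.integral_congr (g := fun _ => (0 : ℝ)), intervalIntegral.integral_zero]
    intro x hx
    rw [uIcc_of_le (by norm_num)] at hx
    refine max_eq_right (mul_nonpos_of_nonneg_of_nonpos pi_pos.le
      (cos_nonpos_of_pi_div_two_le_of_le ?_ ?_)) <;> nlinarith [hx.1, hx.2, pi_pos]
  calc ∫ x in (0 : ℝ)..1, V x = ∫ x in (-(1 / 4) : ℝ)..(-(1 / 4) + 1), V x := by
        simpa using (hper.intervalIntegral_add_eq (-(1 / 4)) 0).symm
    _ = 1 := by
      rw [← intervalIntegral.integral_add_adjacent_intervals (b := 1 / 4)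
        (hVc.intervalIntegrable _ _) (hVc.intervalIntegrable _ _)]
      norm_num [hcos_nonneg, hcos_nonpos]

theorem stmt19 (u : ℝ → ℝ)
    (m : ℝ → ℝ)
    (hm0 : ∀ᵐ x ∂(volume : Measure ℝ), x ∈ Icc (0 : ℝ) 1 → 0 ≤ m x)
    (hmass : (∫ x in Icc (0 : ℝ) 1, m x) = 1)
    (H : ℝ)
    (h1 : ∀ᵐ x ∂(volume : Measure ℝ), x ∈ Icc (0 : ℝ) 1 →
      m x * deriv u x = 0)
    (h2 : ∀ᵐ x ∂(volume : Measure ℝ), x ∈ Icc (0 : ℝ) 1 →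
      (1 / 2) * deriv u x ^ 2 + Real.pi * Real.cos (2 * Real.pi * x) ≤ m x + H)
    (h3 : ∀ᵐ x ∂(volume : Measure ℝ), x ∈ Icc (0 : ℝ) 1 →
      ((1 / 2) * deriv u x ^ 2 + Real.pi * Real.cos (2 * Real.pi * x) - m x - H) * m x = 0) :
    H = 0 ∧ ∀ᵐ x ∂(volume : Measure ℝ), x ∈ Icc (0 : ℝ) 1 →
      m x = max (Real.pi * Real.cos (2 * Real.pi * x)) 0 := by
  have hm_eq : ∀ᵐ x ∂(volume : Measure ℝ), x ∈ Icc (0 : ℝ) 1 →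
      m x = max (π * cos (2 * π * x) - H) 0 := by
    filter_upwards [hm0, h1, h2, h3] with x h0 h1 h2 h3 hx
    exact eq_max_sub_zero_of_complementarity (h0 hx) (h1 hx) (h2 hx) (h3 hx)
  have hmass_H : ∫ x in (0 : ℝ)..1, max (π * cos (2 * π * x) - H) 0 = 1 := by
    rw [intervalIntegral.integral_of_le zero_le_one, ← integral_Icc_eq_integral_Ioc,
      ← setIntegral_congr_ae measurableSet_Icc hm_eq, hmass]
  have hmass_0 := integral_max_pi_mul_cos_two_pi_mul_zero
  have hmass_lt {c c' : ℝ} (hcc' : c < c') (hc : c < π) :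
      ∫ x in (0 : ℝ)..1, max (π * cos (2 * π * x) - c') 0 <
        ∫ x in (0 : ℝ)..1, max (π * cos (2 * π * x) - c) 0 :=
    integral_max_sub_lt_of_lt one_pos (by fun_prop) hcc' ⟨0, by simp, by simpa using hc⟩
  have hH : H = 0 := by
    rcases lt_trichotomy H 0 with hneg | hzero | hpos
    · simpa [hmass_H, hmass_0] using hmass_lt hneg (hneg.trans pi_pos)
    · exact hzero
    · simpa [hmass_H, hmass_0] using hmass_lt hpos pi_pos
  refine ⟨hH, ?_⟩
  filter_upwards [hm_eq] with x hx hmem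
  rw [hx hmem, hH, sub_zero]
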